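/- Let Y be a random variable taking finitely many values, each value a finite sequence (list) over a finite alphabet A, and let Y′ be a random variable taking finitely many values in lists over a finite alphabet B, defined on the same probability space, with |Y′| = |Y| pointwise; write M = |Y|. Then H(Y′) ≥ H(Y) − ∑_{m : P(M=m)>0} P(M=m) · log₂( ∑_{y′∈B^m} P(Y′=y′ | M=m) · ∑_{y∈A^m : P(Y=y)>0} P(Y′=y′ | Y=y) ). -/
import Mathlib


open scoped BigOperators
open Classical

noncomputable section

/-- A finite probability space: a probability mass function on a finite type. -/
structure FinProb (Ω : Type*) [Fintype Ω] where
  p : Ω → ℝ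
  nonneg : ∀ ω, 0 ≤ p ω
  sum_one : ∑ ω, p ω = 1

variable {Ω : Type*} [Fintype Ω]

/-- Probability of an event. -/
def pr (μ : FinProb Ω) (E : Ω → Prop) : ℝ :=
  ∑ ω, if E ω then μ.p ω else 0

/-- Shannon entropy (base 2) of a random variable with finitely many values. -/
def entropy {S : Type*} (μ : FinProb Ω) (U : Ω → S) : ℝ :=
  -∑ u ∈ Finset.univ.image U,
    pr μ (fun ω => U ω = u) * Real.logb 2 (pr μ (fun ω => U ω = u))

/-- Conditional Shannon entropy `H(U | V)`. -/
def condEntropy {S T : Type*} (μ : FinProb Ω) (U : Ω → S) (V : Ω → T) : ℝ :=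
  ∑ v ∈ (Finset.univ.image V).filter (fun v => 0 < pr μ (fun ω => V ω = v)),
    pr μ (fun ω => V ω = v) *
      (-∑ u ∈ Finset.univ.image U,
        (pr μ (fun ω => U ω = u ∧ V ω = v) / pr μ (fun ω => V ω = v)) *
          Real.logb 2 (pr μ (fun ω => U ω = u ∧ V ω = v) / pr μ (fun ω => V ω = v)))

/-- Mutual information `I(U;V) = H(U) - H(U|V)`. -/
def mutualInfo {S T : Type*} (μ : FinProb Ω) (U : Ω → S) (V : Ω → T) : ℝ :=
  entropy μ U - condEntropy μ U V

/-- Expected length of a list-valued random variable. -/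
def expLen {A : Type*} (μ : FinProb Ω) (Y : Ω → List A) : ℝ :=
  ∑ ω, μ.p ω * (Y ω).length

namespace Stmt2Aux

lemma pr_nonneg (μ : FinProb Ω) (E : Ω → Prop) : 0 ≤ pr μ E :=
  Finset.sum_nonneg fun ω _ => by by_cases h : E ω <;> simp [h, μ.nonneg ω]

lemma pr_mono (μ : FinProb Ω) {E F : Ω → Prop} (h : ∀ ω, E ω → F ω) : pr μ E ≤ pr μ F :=
  Finset.sum_le_sum fun ω _ => by
    by_cases hE : E ω
    · simp [hE, h ω hE]
    · by_cases hF : F ω <;> simp [hE, hF, μ.nonneg ω]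

lemma pr_congr (μ : FinProb Ω) {E F : Ω → Prop} (h : ∀ ω, E ω ↔ F ω) : pr μ E = pr μ F := by
  unfold pr
  exact Finset.sum_congr rfl fun ω _ => by rw [if_congr (h ω) rfl rfl]

lemma pr_eq_zero {S : Type*} (μ : FinProb Ω) (Z : Ω → S) {y : S}
    (hy : ∀ ω, Z ω ≠ y) : pr μ (fun ω => Z ω = y) = 0 :=
  Finset.sum_eq_zero fun ω _ => by simp [hy ω]

lemma exists_ofFn {B : Type*} {m : ℕ} (l : List B) (hl : l.length = m) :
    ∃ v : Fin m → B, List.ofFn v = l := by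
  subst hl; exact ⟨l.get, List.ofFn_get l⟩

lemma sum_ite_ofFn {B : Type*} [Fintype B] {m : ℕ} (l : List B) (c : ℝ) :
    (∑ v : Fin m → B, if l = List.ofFn v then c else 0) = if l.length = m then c else 0 := by
  by_cases h : l.length = m
  · obtain ⟨v₀, hv₀⟩ := exists_ofFn l h
    rw [if_pos h]
    have : ∀ v : Fin m → B, (l = List.ofFn v) ↔ (v₀ = v) := by
      intro v
      constructor
      · intro hv; exact List.ofFn_injective (hv₀.trans hv)
      · intro hv; rw [← hv, hv₀]
    calc (∑ v : Fin m → B, if l = List.ofFn v then c else 0)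
        = ∑ v : Fin m → B, if v₀ = v then c else 0 :=
          Finset.sum_congr rfl fun v _ => by rw [if_congr (this v) rfl rfl]
      _ = c := by rw [Finset.sum_ite_eq]; simp
  · rw [if_neg h]
    refine Finset.sum_eq_zero fun v _ => ?_
    have : l ≠ List.ofFn v := fun hv => h (by rw [hv, List.length_ofFn])
    simp [this]

lemma sum_pr_ofFn {B : Type*} [Fintype B] (μ : FinProb Ω) {m : ℕ} (g : Ω → List B)
    (E : Ω → Prop) (hg : ∀ ω, E ω → (g ω).length = m) :
    ∑ v : Fin m → B, pr μ (fun ω => g ω = List.ofFn v ∧ E ω) = pr μ E := by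
  unfold pr
  rw [Finset.sum_comm]
  refine Finset.sum_congr rfl fun ω _ => ?_
  by_cases hE : E ω
  · rw [if_pos hE]
    have h1 : (∑ v : Fin m → B, if g ω = List.ofFn v then μ.p ω else 0) = μ.p ω := by
      rw [sum_ite_ofFn (B := B) (m := m) (g ω) (μ.p ω), if_pos (hg ω hE)]
    refine Eq.trans (Finset.sum_congr rfl fun v _ => ?_) h1
    by_cases hv : g ω = List.ofFn v <;> simp [hv, hE]
  · simp [hE]

lemma sum_lists {A : Type*} [Fintype A] (μ : FinProb Ω) (Z : Ω → List A) (m : ℕ)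
    (f : List A → ℝ) (hf : ∀ l : List A, pr μ (fun ω => Z ω = l) = 0 → f l = 0) :
    ∑ y ∈ (Finset.univ.image Z).filter (fun y => y.length = m), f y
      = ∑ u : Fin m → A, f (List.ofFn u) := by
  have himg : ∑ u : Fin m → A, f (List.ofFn u)
      = ∑ y ∈ Finset.univ.image (List.ofFn : (Fin m → A) → List A), f y :=
    (Finset.sum_image fun u _ v _ h => List.ofFn_injective h).symm
  rw [himg]
  apply Finset.sum_subset
  · intro y hy
    rw [Finset.mem_filter] at hy
    obtain ⟨v₀, hv₀⟩ := exists_ofFn y hy.2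
    exact Finset.mem_image.mpr ⟨v₀, Finset.mem_univ _, hv₀⟩
  · intro y hy hys
    obtain ⟨u, _, hu⟩ := Finset.mem_image.mp hy
    apply hf
    apply pr_eq_zero
    intro ω hω
    refine hys (Finset.mem_filter.mpr ⟨?_, by rw [← hu, List.length_ofFn]⟩)
    exact Finset.mem_image.mpr ⟨ω, Finset.mem_univ ω, hω⟩

lemma jensen_logb {ι : Type*} (s : Finset ι) (w x : ι → ℝ)
    (hw : ∀ i ∈ s, 0 ≤ w i) (hx : ∀ i ∈ s, 0 < w i → 0 < x i)
    (hW : 0 < ∑ i ∈ s, w i) :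
    ∑ i ∈ s, w i * Real.logb 2 (x i)
      ≤ (∑ i ∈ s, w i) * Real.logb 2 ((∑ i ∈ s, w i * x i) / (∑ i ∈ s, w i)) := by
  set W := ∑ i ∈ s, w i with hWdef
  set T := ∑ i ∈ s, w i * x i with hTdef
  have hlog2 : (0:ℝ) < Real.log 2 := Real.log_pos one_lt_two
  obtain ⟨i₀, hi₀s, hi₀⟩ : ∃ i ∈ s, 0 < w i := by
    by_contra h
    push_neg at h
    have : W ≤ 0 := Finset.sum_nonpos h
    linarith
  have hwx : ∀ i ∈ s, 0 ≤ w i * x i := by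
    intro i hi
    rcases (hw i hi).eq_or_lt with h | h
    · simp [← h]
    · exact le_of_lt (mul_pos h (hx i hi h))
  have hT : 0 < T :=
    lt_of_lt_of_le (mul_pos hi₀ (hx i₀ hi₀s hi₀)) (Finset.single_le_sum hwx hi₀s)
  have key : ∀ i ∈ s, w i * Real.log (x i)
      ≤ w i * Real.log (T / W) + (w i * x i * (W / T) - w i) := by
    intro i hi
    rcases (hw i hi).eq_or_lt with h | h
    · rw [← h]; simp
    · have hxi := hx i hi h
      have hxe : x i = (x i * (W / T)) * (T / W) := by field_simp
      have h1 : Real.log (x i) = Real.log (x i * (W / T)) + Real.log (T / W) := by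
        rw [hxe, Real.log_mul (by positivity) (by positivity)]
        rw [← hxe]
      have h2 : Real.log (x i * (W / T)) ≤ x i * (W / T) - 1 :=
        Real.log_le_sub_one_of_pos (by positivity)
      have h3 : w i * Real.log (x i * (W / T)) ≤ w i * (x i * (W / T) - 1) :=
        mul_le_mul_of_nonneg_left h2 (le_of_lt h)
      rw [h1]
      nlinarith [h3]
  have hsum := Finset.sum_le_sum key
  have hrhs : ∑ i ∈ s, (w i * Real.log (T / W) + (w i * x i * (W / T) - w i))
      = W * Real.log (T / W) := by
    rw [Finset.sum_add_distrib, Finset.sum_sub_distrib, ← Finset.sum_mul, ← Finset.sum_mul,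
      ← hWdef, ← hTdef]
    have : T * (W / T) = W := by field_simp
    rw [this]
    ring
  rw [hrhs] at hsum
  have : ∑ i ∈ s, w i * Real.logb 2 (x i) = (∑ i ∈ s, w i * Real.log (x i)) / Real.log 2 := by
    rw [Finset.sum_div]
    exact Finset.sum_congr rfl fun i _ => by rw [Real.logb, mul_div_assoc]
  calc ∑ i ∈ s, w i * Real.logb 2 (x i)
      = (∑ i ∈ s, w i * Real.log (x i)) / Real.log 2 := this
    _ ≤ (W * Real.log (T / W)) / Real.log 2 := by gcongr
    _ = W * Real.logb 2 (T / W) := by rw [Real.logb, mul_div_assoc]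

lemma key {Ω A B : Type*} [Fintype Ω] [Fintype A] [Fintype B] (μ : FinProb Ω)
    (Y : Ω → List A) (Y' : Ω → List B)
    (hlen : ∀ ω, (Y' ω).length = (Y ω).length) (m : ℕ)
    (hm : 0 < pr μ (fun ω => (Y ω).length = m)) :
    (∑ y ∈ (Finset.univ.image Y).filter (fun y => y.length = m),
        -(pr μ (fun ω => Y ω = y) * Real.logb 2 (pr μ (fun ω => Y ω = y))))
      - (∑ y' ∈ (Finset.univ.image Y').filter (fun y' => y'.length = m),
        -(pr μ (fun ω => Y' ω = y') * Real.logb 2 (pr μ (fun ω => Y' ω = y'))))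
    ≤ pr μ (fun ω => (Y ω).length = m) *
        Real.logb 2 (∑ y' : Fin m → B,
          (pr μ (fun ω => Y' ω = List.ofFn y' ∧ (Y ω).length = m) /
            pr μ (fun ω => (Y ω).length = m)) *
          ∑ y ∈ Finset.univ.filter
              (fun y : Fin m → A => 0 < pr μ (fun ω => Y ω = List.ofFn y)),
            pr μ (fun ω => Y' ω = List.ofFn y' ∧ Y ω = List.ofFn y) /
              pr μ (fun ω => Y ω = List.ofFn y)) := by
  classical
  -- abbreviations (as plain functions via have-style defs is impossible; use local notation)
  let a : (Fin m → A) → ℝ := fun u => pr μ (fun ω => Y ω = List.ofFn u)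
  let b : (Fin m → B) → ℝ := fun v => pr μ (fun ω => Y' ω = List.ofFn v)
  let j : (Fin m → A) → (Fin m → B) → ℝ :=
    fun u v => pr μ (fun ω => Y' ω = List.ofFn v ∧ Y ω = List.ofFn u)
  let W : ℝ := pr μ (fun ω => (Y ω).length = m)
  have hW : 0 < W := hm
  have ha0 : ∀ u, 0 ≤ a u := fun u => pr_nonneg μ _
  have hj0 : ∀ u v, 0 ≤ j u v := fun u v => pr_nonneg μ _
  have hja : ∀ u v, j u v ≤ a u := fun u v => pr_mono μ (fun ω h => h.2)
  have hjb : ∀ u v, j u v ≤ b v := fun u v => pr_mono μ (fun ω h => h.1)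
  have hsumv : ∀ u, ∑ v : Fin m → B, j u v = a u := fun u =>
    sum_pr_ofFn μ Y' (fun ω => Y ω = List.ofFn u)
      (fun ω h => by rw [hlen, h, List.length_ofFn])
  have hbm : ∀ v : Fin m → B,
      pr μ (fun ω => Y' ω = List.ofFn v ∧ (Y ω).length = m) = b v := fun v =>
    pr_congr μ (fun ω => ⟨fun h => h.1, fun h => ⟨h, by rw [← hlen, h, List.length_ofFn]⟩⟩)
  have hsumu : ∀ v, ∑ u : Fin m → A, j u v = b v := by
    intro v
    have h1 : ∀ u : Fin m → A, j u v
        = pr μ (fun ω => Y ω = List.ofFn u ∧ (Y' ω = List.ofFn v ∧ (Y ω).length = m)) := by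
      intro u
      refine pr_congr μ fun ω => ?_
      constructor
      · rintro ⟨h1, h2⟩; exact ⟨h2, h1, by rw [h2, List.length_ofFn]⟩
      · rintro ⟨h1, h2, _⟩; exact ⟨h2, h1⟩
    rw [Finset.sum_congr rfl (fun u _ => h1 u),
      sum_pr_ofFn μ Y (fun ω => Y' ω = List.ofFn v ∧ (Y ω).length = m) (fun ω h => h.2)]
    exact hbm v
  have hsuma : ∑ u : Fin m → A, a u = W := by
    have h1 : ∀ u : Fin m → A, a u
        = pr μ (fun ω => Y ω = List.ofFn u ∧ (Y ω).length = m) := fun u =>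
      pr_congr μ (fun ω => ⟨fun h => ⟨h, by rw [h, List.length_ofFn]⟩, fun h => h.1⟩)
    rw [Finset.sum_congr rfl (fun u _ => h1 u)]
    exact sum_pr_ofFn μ Y (fun ω => (Y ω).length = m) (fun ω h => h)
  -- rewrite the two entropy blocks as sums over functions
  have hHY : (∑ y ∈ (Finset.univ.image Y).filter (fun y => y.length = m),
      -(pr μ (fun ω => Y ω = y) * Real.logb 2 (pr μ (fun ω => Y ω = y))))
      = ∑ u : Fin m → A, -(a u * Real.logb 2 (a u)) :=
    sum_lists μ Y m _ (fun l h => by rw [h]; simp)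
  have hHY' : (∑ y' ∈ (Finset.univ.image Y').filter (fun y' => y'.length = m),
      -(pr μ (fun ω => Y' ω = y') * Real.logb 2 (pr μ (fun ω => Y' ω = y'))))
      = ∑ v : Fin m → B, -(b v * Real.logb 2 (b v)) :=
    sum_lists μ Y' m _ (fun l h => by rw [h]; simp)
  -- Jensen
  have hsumw : ∑ p : (Fin m → A) × (Fin m → B), j p.1 p.2 = W := by
    rw [Fintype.sum_prod_type, Finset.sum_congr rfl (fun u _ => hsumv u)]
    exact hsuma
  have jensen := jensen_logb (Finset.univ : Finset ((Fin m → A) × (Fin m → B)))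
    (fun p => j p.1 p.2) (fun p => b p.2 / a p.1)
    (fun p _ => hj0 p.1 p.2)
    (fun p _ hp => div_pos (lt_of_lt_of_le hp (hjb p.1 p.2)) (lt_of_lt_of_le hp (hja p.1 p.2)))
    (by rw [hsumw]; exact hW)
  rw [hsumw] at jensen
  -- LHS identity
  have hL : ∑ p : (Fin m → A) × (Fin m → B), j p.1 p.2 * Real.logb 2 (b p.2 / a p.1)
      = (∑ v : Fin m → B, b v * Real.logb 2 (b v))
        - (∑ u : Fin m → A, a u * Real.logb 2 (a u)) := by
    have hterm : ∀ p : (Fin m → A) × (Fin m → B),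
        j p.1 p.2 * Real.logb 2 (b p.2 / a p.1)
          = j p.1 p.2 * Real.logb 2 (b p.2) - j p.1 p.2 * Real.logb 2 (a p.1) := by
      intro p
      rcases (hj0 p.1 p.2).eq_or_lt with h | h
      · rw [← h]; ring
      · have ha' : 0 < a p.1 := lt_of_lt_of_le h (hja p.1 p.2)
        have hb' : 0 < b p.2 := lt_of_lt_of_le h (hjb p.1 p.2)
        rw [Real.logb_div hb'.ne' ha'.ne']; ring
    rw [Finset.sum_congr rfl (fun p _ => hterm p), Finset.sum_sub_distrib]
    congr 1
    · rw [Fintype.sum_prod_type, Finset.sum_comm]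
      refine Finset.sum_congr rfl fun v _ => ?_
      have hstep : (∑ x : Fin m → A, j (x, v).1 (x, v).2 * Real.logb 2 (b (x, v).2))
          = (∑ x : Fin m → A, j x v) * Real.logb 2 (b v) :=
        (Finset.sum_mul Finset.univ (fun x => j x v) (Real.logb 2 (b v))).symm
      rw [hstep, hsumu v]
    · rw [Fintype.sum_prod_type]
      refine Finset.sum_congr rfl fun u _ => ?_
      have hstep : (∑ y : Fin m → B, j (u, y).1 (u, y).2 * Real.logb 2 (a (u, y).1))
          = (∑ y : Fin m → B, j u y) * Real.logb 2 (a u) :=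
        (Finset.sum_mul Finset.univ (fun y => j u y) (Real.logb 2 (a u))).symm
      rw [hstep, hsumv u]
  -- argument equality
  have hTS : (∑ p : (Fin m → A) × (Fin m → B), j p.1 p.2 * (b p.2 / a p.1)) / W
      = ∑ y' : Fin m → B,
          (pr μ (fun ω => Y' ω = List.ofFn y' ∧ (Y ω).length = m) /
            pr μ (fun ω => (Y ω).length = m)) *
          ∑ y ∈ Finset.univ.filter
              (fun y : Fin m → A => 0 < pr μ (fun ω => Y ω = List.ofFn y)),
            pr μ (fun ω => Y' ω = List.ofFn y' ∧ Y ω = List.ofFn y) /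
              pr μ (fun ω => Y ω = List.ofFn y) := by
    have hT : (∑ p : (Fin m → A) × (Fin m → B), j p.1 p.2 * (b p.2 / a p.1))
        = ∑ v : Fin m → B, b v * ∑ u ∈ Finset.univ.filter (fun u : Fin m → A => 0 < a u),
            j u v / a u := by
      rw [Fintype.sum_prod_type, Finset.sum_comm]
      refine Finset.sum_congr rfl fun v _ => ?_
      rw [Finset.mul_sum]
      rw [← Finset.sum_filter_of_ne (p := fun u : Fin m → A => 0 < a u)
        (f := fun u => j u v * (b v / a u)) ?hne]
      · exact Finset.sum_congr rfl fun u _ => by ring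
      · intro u _ hne
        rcases (ha0 u).eq_or_lt with h | h
        · exfalso
          apply hne
          have hz : j u v = 0 := le_antisymm ((hja u v).trans_eq h.symm) (hj0 u v)
          show j u v * (b v / a u) = 0
          rw [hz, zero_mul]
        · exact h
    rw [hT]
    rw [Finset.sum_div]
    refine Finset.sum_congr rfl fun v _ => ?_
    rw [hbm v]
    rw [div_mul_eq_mul_div, mul_comm]
  calc (∑ y ∈ (Finset.univ.image Y).filter (fun y => y.length = m),
        -(pr μ (fun ω => Y ω = y) * Real.logb 2 (pr μ (fun ω => Y ω = y))))
      - (∑ y' ∈ (Finset.univ.image Y').filter (fun y' => y'.length = m),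
        -(pr μ (fun ω => Y' ω = y') * Real.logb 2 (pr μ (fun ω => Y' ω = y'))))
      = ∑ p : (Fin m → A) × (Fin m → B), j p.1 p.2 * Real.logb 2 (b p.2 / a p.1) := by
        rw [hHY, hHY', hL, Finset.sum_neg_distrib, Finset.sum_neg_distrib]; ring
    _ ≤ W * Real.logb 2
          ((∑ p : (Fin m → A) × (Fin m → B), j p.1 p.2 * (b p.2 / a p.1)) / W) := jensen
    _ = _ := by rw [hTS]

end Stmt2Aux

open Stmt2Aux

/-- for list-valued `Y`, `Y'` with `|Y'| = |Y|` pointwise and `M = |Y|`,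
`H(Y') ≥ H(Y) − ∑_{m : P(M=m)>0} P(M=m) · log₂(∑_{y'∈B^m} P(Y'=y'|M=m) ·
∑_{y∈A^m : P(Y=y)>0} P(Y'=y'|Y=y))`, where length-`m` strings are parametrized by `Fin m → A`. -/
theorem stmt2 {Ω A B : Type*} [Fintype Ω] [Fintype A] [Fintype B] (μ : FinProb Ω)
    (Y : Ω → List A) (Y' : Ω → List B)
    (hlen : ∀ ω, (Y' ω).length = (Y ω).length) :
    entropy μ Y' ≥ entropy μ Y -
      ∑ m ∈ (Finset.univ.image (fun ω => (Y ω).length)).filter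
          (fun m => 0 < pr μ (fun ω => (Y ω).length = m)),
        pr μ (fun ω => (Y ω).length = m) *
          Real.logb 2 (∑ y' : Fin m → B,
            (pr μ (fun ω => Y' ω = List.ofFn y' ∧ (Y ω).length = m) /
              pr μ (fun ω => (Y ω).length = m)) *
            ∑ y ∈ Finset.univ.filter
                (fun y : Fin m → A => 0 < pr μ (fun ω => Y ω = List.ofFn y)),
              pr μ (fun ω => Y' ω = List.ofFn y' ∧ Y ω = List.ofFn y) /
                pr μ (fun ω => Y ω = List.ofFn y)) := by
  classical
  rw [ge_iff_le, sub_le_iff_le_add, ← sub_le_iff_le_add']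
  have hY : entropy μ Y = ∑ m ∈ Finset.univ.image (fun ω => (Y ω).length),
      ∑ y ∈ (Finset.univ.image Y).filter (fun y => y.length = m),
        -(pr μ (fun ω => Y ω = y) * Real.logb 2 (pr μ (fun ω => Y ω = y))) := by
    unfold entropy
    rw [← Finset.sum_neg_distrib]
    have hmap : ∀ y ∈ Finset.univ.image Y,
        (fun y : List A => y.length) y ∈ Finset.univ.image (fun ω => (Y ω).length) := by
      intro y hy
      obtain ⟨ω, _, rfl⟩ := Finset.mem_image.mp hy
      exact Finset.mem_image.mpr ⟨ω, Finset.mem_univ ω, rfl⟩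
    convert (Finset.sum_fiberwise_of_maps_to hmap
      (fun y => -(pr μ (fun ω => Y ω = y) * Real.logb 2 (pr μ (fun ω => Y ω = y))))).symm using 2
    congr!
  have hY' : entropy μ Y' = ∑ m ∈ Finset.univ.image (fun ω => (Y ω).length),
      ∑ y' ∈ (Finset.univ.image Y').filter (fun y' => y'.length = m),
        -(pr μ (fun ω => Y' ω = y') * Real.logb 2 (pr μ (fun ω => Y' ω = y'))) := by
    unfold entropy
    rw [← Finset.sum_neg_distrib]
    have hmap : ∀ y ∈ Finset.univ.image Y',
        (fun y' : List B => y'.length) y ∈ Finset.univ.image (fun ω => (Y ω).length) := by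
      intro y hy
      obtain ⟨ω, _, rfl⟩ := Finset.mem_image.mp hy
      exact Finset.mem_image.mpr ⟨ω, Finset.mem_univ ω, (hlen ω).symm⟩
    convert (Finset.sum_fiberwise_of_maps_to hmap
      (fun y' => -(pr μ (fun ω => Y' ω = y') * Real.logb 2 (pr μ (fun ω => Y' ω = y'))))).symm using 2
    congr!
  rw [hY, hY', ← Finset.sum_sub_distrib]
  have hvan : ∀ m ∈ Finset.univ.image (fun ω => (Y ω).length),
      ((∑ y ∈ (Finset.univ.image Y).filter (fun y => y.length = m),
        -(pr μ (fun ω => Y ω = y) * Real.logb 2 (pr μ (fun ω => Y ω = y))))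
      - (∑ y' ∈ (Finset.univ.image Y').filter (fun y' => y'.length = m),
        -(pr μ (fun ω => Y' ω = y') * Real.logb 2 (pr μ (fun ω => Y' ω = y'))))) ≠ 0
      → 0 < pr μ (fun ω => (Y ω).length = m) := by
    intro m _ hne
    by_contra h
    apply hne
    have h0 : pr μ (fun ω => (Y ω).length = m) = 0 :=
      le_antisymm (not_lt.mp h) (pr_nonneg μ _)
    have hF : (∑ y ∈ (Finset.univ.image Y).filter (fun y => y.length = m),
        -(pr μ (fun ω => Y ω = y) * Real.logb 2 (pr μ (fun ω => Y ω = y)))) = 0 := by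
      refine Finset.sum_eq_zero fun y hy => ?_
      have hylen : y.length = m := (Finset.mem_filter.mp hy).2
      have hz : pr μ (fun ω => Y ω = y) = 0 :=
        le_antisymm (le_trans (pr_mono μ fun ω hω => by rw [hω]; exact hylen) h0.le)
          (pr_nonneg μ _)
      rw [hz]
      simp
    have hF' : (∑ y' ∈ (Finset.univ.image Y').filter (fun y' => y'.length = m),
        -(pr μ (fun ω => Y' ω = y') * Real.logb 2 (pr μ (fun ω => Y' ω = y')))) = 0 := by
      refine Finset.sum_eq_zero fun y' hy' => ?_
      have hylen : y'.length = m := (Finset.mem_filter.mp hy').2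
      have hz : pr μ (fun ω => Y' ω = y') = 0 :=
        le_antisymm (le_trans (pr_mono μ fun ω hω => by rw [← hlen ω, hω]; exact hylen) h0.le)
          (pr_nonneg μ _)
      rw [hz]
      simp
    rw [hF, hF', sub_self]
  rw [← Finset.sum_filter_of_ne hvan]
  refine Finset.sum_le_sum fun m hm => ?_
  exact key μ Y Y' hlen m (Finset.mem_filter.mp hm).2


end
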